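/- arXiv:2211.05252 — 2 statements merged into one kernel-verified Lean document; each statement's English description precedes it below -/
import Mathlib

section
/- Let p be an odd prime and suppose α₀ ∈ ℚ_p is the image of a rational number. If (α_n) in ℚ_p and (b_n) in ℚ are sequences satisfying the laws of Algorithm (3) applied to α₀, then there exists an index N with α_N = b_N; that is, Algorithm (3) applied to a rational number stops in a finite number of steps. -/
/-- A rational number `a` is a `p`-adic fraction if `a * p^m` is an integer
for some natural number `m`, i.e. `a ∈ ℤ[1/p]`. -/
def IsPadicFrac (p : ℕ) (a : ℚ) : Prop := ∃ (m : ℕ) (z : ℤ), a * (p : ℚ) ^ m = (z : ℚ)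

/-- `b` is Browkin's integral floor `s α`: the unique `p`-adic fraction with
`|b| < p/2` and `‖α - b‖_p < 1`. -/
def IsIntFloor (p : ℕ) [Fact p.Prime] (α : ℚ_[p]) (b : ℚ) : Prop :=
  IsPadicFrac p b ∧ |b| < (p : ℚ) / 2 ∧ ‖α - (b : ℚ_[p])‖ < 1

/-- `b` is Browkin's fractional floor `t α`: the unique `p`-adic fraction with
`|b| < 1/2` and `‖α - b‖_p ≤ 1`. -/
def IsFracFloor (p : ℕ) [Fact p.Prime] (α : ℚ_[p]) (b : ℚ) : Prop :=
  IsPadicFrac p b ∧ |b| < 1 / 2 ∧ ‖α - (b : ℚ_[p])‖ ≤ 1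

/-- Algorithm (3): `b n = s (α n)` for even `n`, `b n = t (α n)` for odd `n`,
and `α (n + 1) = (α n - b n)⁻¹`. -/
def Alg3 (p : ℕ) [Fact p.Prime] (α : ℕ → ℚ_[p]) (b : ℕ → ℚ) : Prop :=
  (∀ n, Even n → IsIntFloor p (α n) (b n)) ∧
  (∀ n, Odd n → IsFracFloor p (α n) (b n)) ∧
  ∀ n, α (n + 1) = (α n - (b n : ℚ_[p]))⁻¹

/-!
Every `α n` is rational. At an odd index write `α n = c / (p d)` with integers `c, d`. As
`b n = t (α n)` lies in `ℤ[1/p]` and `‖α n - b n‖_p ≤ 1`, the number `d (α n - b n)` is an integer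
`N` with `|N| ≤ |c|/p + |d|/2`, so `α (n+1) = d / N`. As `b (n+1) = s (α (n+1))` lies in `ℤ[1/p]`
and `‖α (n+1) - b (n+1)‖_p ≤ 1/p`, the number `N (α (n+1) - b (n+1)) / p` is an integer `h` with
`|h| < |d|/p + |N|/2`, so `α (n+2) = N / (p h)`. Hence `|N| + 2|h| < |c| + 2|d|`: the natural
number `|c| + 2|d|` cannot decrease forever, so the algorithm stops.
-/

namespace IsPadicFrac

variable {p : ℕ}

theorem intCast (z : ℤ) : IsPadicFrac p z := ⟨0, z, by simp⟩

theorem mul {a b : ℚ} (ha : IsPadicFrac p a) (hb : IsPadicFrac p b) : IsPadicFrac p (a * b) := by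
  obtain ⟨m, y, hy⟩ := ha
  obtain ⟨n, z, hz⟩ := hb
  exact ⟨m + n, y * z, by push_cast; rw [← hy, ← hz]; ring⟩

theorem sub {a b : ℚ} (ha : IsPadicFrac p a) (hb : IsPadicFrac p b) : IsPadicFrac p (a - b) := by
  obtain ⟨m, y, hy⟩ := ha
  obtain ⟨n, z, hz⟩ := hb
  exact ⟨m + n, y * p ^ n - z * p ^ m, by push_cast; rw [← hy, ← hz]; ring⟩

theorem div_natCast {a : ℚ} (ha : IsPadicFrac p a) : IsPadicFrac p (a / p) := by
  obtain ⟨m, y, hy⟩ := ha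
  rcases eq_or_ne (p : ℚ) 0 with hp | hp
  · exact ⟨0, 0, by simp [hp]⟩
  · exact ⟨m + 1, y, by rw [← hy, pow_succ]; field_simp⟩

theorem exists_eq_intCast_of_norm_le_one [Fact p.Prime] {a : ℚ} (ha : IsPadicFrac p a)
    (hnorm : ‖(a : ℚ_[p])‖ ≤ 1) : ∃ z : ℤ, a = z := by
  obtain ⟨m, y, hy⟩ := ha
  have hy_norm : ‖(y : ℚ_[p])‖ ≤ (p : ℝ) ^ (-m : ℤ) := by
    have : (y : ℚ_[p]) = (a : ℚ_[p]) * (p : ℚ_[p]) ^ m := by exact_mod_cast hy.symm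
    rw [this, norm_mul, Padic.norm_p_pow]
    exact mul_le_of_le_one_left (by positivity) hnorm
  obtain ⟨z, rfl⟩ := (Padic.norm_int_le_pow_iff_dvd y m).mp hy_norm
  refine ⟨z, mul_right_cancel₀ (pow_ne_zero m (Nat.cast_ne_zero.mpr (Fact.out : p.Prime).ne_zero)) ?_⟩
  rw [hy]; push_cast; ring

end IsPadicFrac

section Steps

variable {p : ℕ} [Fact p.Prime]

theorem IsFracFloor.exists_sub_eq_intCast_div {c d : ℤ} {b : ℚ} (hd : d ≠ 0)
    (hb : IsFracFloor p ((c / (p * d) : ℚ) : ℚ_[p]) b) :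
    ∃ N : ℤ, (c / (p * d) : ℚ) - b = N / d ∧ |(N : ℚ)| ≤ |(c : ℚ)| / p + |(d : ℚ)| / 2 := by
  obtain ⟨hb_frac, hb_abs, hb_norm⟩ := hb
  have hp : (0 : ℚ) < p := by exact_mod_cast (Fact.out : p.Prime).pos
  have hd' : (d : ℚ) ≠ 0 := by exact_mod_cast hd
  have hN_eq : (c / p - d * b : ℚ) = d * ((c / (p * d) : ℚ) - b) := by field_simp
  have hN_frac : IsPadicFrac p (c / p - d * b) :=
    ((IsPadicFrac.intCast c).div_natCast).sub ((IsPadicFrac.intCast d).mul hb_frac)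
  have hN_norm : ‖((c / p - d * b : ℚ) : ℚ_[p])‖ ≤ 1 := by
    rw [hN_eq, Rat.cast_mul, Rat.cast_intCast, Rat.cast_sub, norm_mul]
    exact mul_le_one₀ (Padic.norm_int_le_one d) (norm_nonneg _) hb_norm
  obtain ⟨N, hN⟩ := hN_frac.exists_eq_intCast_of_norm_le_one hN_norm
  refine ⟨N, by rw [← hN, hN_eq]; field_simp, ?_⟩
  calc |(N : ℚ)| = |(c : ℚ) / p - d * b| := by rw [hN]
    _ ≤ |(c : ℚ) / p| + |(d : ℚ) * b| := abs_sub _ _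
    _ ≤ |(c : ℚ)| / p + |(d : ℚ)| / 2 := by
      rw [abs_div, abs_of_pos hp, abs_mul]
      have := mul_le_mul_of_nonneg_left hb_abs.le (abs_nonneg (d : ℚ))
      linarith

theorem IsIntFloor.exists_sub_eq_natCast_mul_intCast_div {d N : ℤ} {b : ℚ} (hN : N ≠ 0)
    (hb : IsIntFloor p ((d / N : ℚ) : ℚ_[p]) b) :
    ∃ h : ℤ, (d / N : ℚ) - b = p * h / N ∧ |(h : ℚ)| < |(d : ℚ)| / p + |(N : ℚ)| / 2 := by
  obtain ⟨hb_frac, hb_abs, hb_norm⟩ := hb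
  have hp : (0 : ℚ) < p := by exact_mod_cast (Fact.out : p.Prime).pos
  have hN' : (N : ℚ) ≠ 0 := by exact_mod_cast hN
  have hh_eq : ((d - N * b) / p : ℚ) = N * ((d / N : ℚ) - b) / p := by field_simp
  have hh_frac : IsPadicFrac p ((d - N * b) / p) :=
    ((IsPadicFrac.intCast d).sub ((IsPadicFrac.intCast N).mul hb_frac)).div_natCast
  -- the norm of `α - s α` is a power of `p` below `1`, hence at most `p⁻¹`
  have hb_norm' : ‖((d / N : ℚ) : ℚ_[p]) - (b : ℚ_[p])‖ ≤ (p : ℝ) ^ (-1 : ℤ) :=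
    (Padic.norm_le_pow_iff_norm_lt_pow_add_one _ _).mpr (by simpa using hb_norm)
  have hh_norm : ‖(((d - N * b) / p : ℚ) : ℚ_[p])‖ ≤ 1 := by
    rw [hh_eq, Rat.cast_div, Rat.cast_mul, Rat.cast_intCast, Rat.cast_sub, Rat.cast_natCast,
      norm_div, norm_mul, Padic.norm_p, div_inv_eq_mul]
    calc ‖(N : ℚ_[p])‖ * ‖((d / N : ℚ) : ℚ_[p]) - (b : ℚ_[p])‖ * p
        ≤ 1 * (p : ℝ) ^ (-1 : ℤ) * p := by
          gcongr
          exact Padic.norm_int_le_one N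
      _ = 1 := by simp [(Fact.out : p.Prime).ne_zero]
  obtain ⟨h, hh⟩ := hh_frac.exists_eq_intCast_of_norm_le_one hh_norm
  refine ⟨h, by rw [← hh, hh_eq]; field_simp, ?_⟩
  have hNb : |(N : ℚ)| * |b| < |(N : ℚ)| * (p / 2) :=
    mul_lt_mul_of_pos_left hb_abs (abs_pos.mpr hN')
  calc |(h : ℚ)| = |(d : ℚ) - N * b| / p := by rw [← hh, abs_div, abs_of_pos hp]
    _ ≤ (|(d : ℚ)| + |(N : ℚ)| * |b|) / p := by
      gcongr
      exact (abs_sub _ _).trans_eq (by rw [abs_mul])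
    _ < (|(d : ℚ)| + |(N : ℚ)| * (p / 2)) / p := by gcongr
    _ = |(d : ℚ)| / p + |(N : ℚ)| / 2 := by field_simp

end Steps

namespace Alg3

variable {p : ℕ} [Fact p.Prime] {α : ℕ → ℚ_[p]} {b : ℕ → ℚ} {n : ℕ}

theorem succ_eq_ratCast (halg : Alg3 p α b) {x : ℚ} (hx : α n = x) :
    α (n + 1) = ((x - b n)⁻¹ : ℚ) := by
  rw [halg.2.2 n, hx]
  push_cast
  rfl

theorem exists_succ_eq_of_even (halg : Alg3 p α b) (hn : Even n) {d N : ℤ} (hN : N ≠ 0)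
    (hα : α n = ((d / N : ℚ) : ℚ_[p])) (hne : α n ≠ b n) :
    ∃ h : ℤ, h ≠ 0 ∧ α (n + 1) = ((N / (p * h) : ℚ) : ℚ_[p]) ∧
      |(h : ℚ)| < |(d : ℚ)| / p + |(N : ℚ)| / 2 := by
  obtain ⟨h, hsub, hbound⟩ :=
    IsIntFloor.exists_sub_eq_natCast_mul_intCast_div hN (hα ▸ halg.1 n hn)
  have hh : h ≠ 0 := by
    rintro rfl
    rw [hα, sub_eq_zero.mp (by simpa using hsub : (d / N : ℚ) - b n = 0)] at hne
    exact hne rfl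
  exact ⟨h, hh, by rw [halg.succ_eq_ratCast hα, hsub, inv_div, mul_comm], hbound⟩

theorem exists_succ_eq_of_odd (halg : Alg3 p α b) (hn : Odd n) {c d : ℤ} (hd : d ≠ 0)
    (hα : α n = ((c / (p * d) : ℚ) : ℚ_[p])) (hne : α n ≠ b n) :
    ∃ N : ℤ, N ≠ 0 ∧ α (n + 1) = ((d / N : ℚ) : ℚ_[p]) ∧
      |(N : ℚ)| ≤ |(c : ℚ)| / p + |(d : ℚ)| / 2 := by
  obtain ⟨N, hsub, hbound⟩ := IsFracFloor.exists_sub_eq_intCast_div hd (hα ▸ halg.2.1 n hn)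
  have hN : N ≠ 0 := by
    rintro rfl
    rw [hα, sub_eq_zero.mp (by simpa using hsub : (c / (p * d) : ℚ) - b n = 0)] at hne
    exact hne rfl
  exact ⟨N, hN, by rw [halg.succ_eq_ratCast hα, hsub, inv_div], hbound⟩

theorem exists_eq_of_odd (halg : Alg3 p α b) (hn : Odd n) {c d : ℤ} (hd : d ≠ 0)
    (hα : α n = ((c / (p * d) : ℚ) : ℚ_[p])) : ∃ N, α N = b N := by
  induction hM : c.natAbs + 2 * d.natAbs using Nat.strong_induction_on generalizing n c d with
  | _ M ih =>
    by_contra! hne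
    obtain ⟨N, hN, hα₁, hN_le⟩ := halg.exists_succ_eq_of_odd hn hd hα (hne n)
    obtain ⟨h, hh, hα₂, hh_lt⟩ :=
      halg.exists_succ_eq_of_even hn.add_one hN hα₁ (hne (n + 1))
    have hp : (2 : ℚ) ≤ p := by exact_mod_cast (Fact.out : p.Prime).two_le
    have hc_div : |(c : ℚ)| / p ≤ |(c : ℚ)| / 2 := by gcongr
    have hd_div : |(d : ℚ)| / p ≤ |(d : ℚ)| / 2 := by gcongr
    have hdecr : N.natAbs + 2 * h.natAbs < M := by
      rw [← hM, ← Nat.cast_lt (α := ℚ)]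
      push_cast [Nat.cast_natAbs, Int.cast_abs]
      linarith
    obtain ⟨K, hK⟩ := ih _ hdecr (hn.add_even even_two) hh hα₂ rfl
    exact hne K hK

end Alg3

theorem stmt_6_general (p : ℕ) [Fact p.Prime] (q : ℚ)
    (α : ℕ → ℚ_[p]) (b : ℕ → ℚ) (h0 : α 0 = (q : ℚ_[p])) (halg : Alg3 p α b) :
    ∃ N : ℕ, α N = (b N : ℚ_[p]) := by
  by_cases hne : α 0 = b 0
  · exact ⟨0, hne⟩
  have hα₀ : α 0 = ((q.num / (q.den : ℤ) : ℚ) : ℚ_[p]) := by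
    rw [h0, Int.cast_natCast, Rat.num_div_den]
  obtain ⟨d, hd, hα₁, -⟩ :=
    halg.exists_succ_eq_of_even Even.zero (Int.natCast_ne_zero.mpr q.den_nz) hα₀ hne
  exact halg.exists_eq_of_odd odd_one hd hα₁

theorem stmt_6 (p : ℕ) [Fact p.Prime] (hp : p ≠ 2) (q : ℚ)
    (α : ℕ → ℚ_[p]) (b : ℕ → ℚ) (h0 : α 0 = (q : ℚ_[p])) (halg : Alg3 p α b) :
    ∃ N : ℕ, α N = (b N : ℚ_[p]) :=
  stmt_6_general p q α b h0 halg
end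

section
/- Let p be an odd prime and let α₀ ∈ ℚ_p be a quadratic irrational with conjugate ᾱ₀. Let (α_n), (b_n) be the sequences produced by Browkin's second algorithm applied to α₀, and assume the expansion is periodic. If the expansion is purely periodic, then ‖α₀‖_p = 1 and ‖ᾱ₀‖_p < 1. -/
/-- Browkin's second algorithm: `b n = s (α n)` for even `n`; for odd `n`,
`b n = t (α n)` if `‖α n - t (α n)‖_p = 1`, and `b n = t (α n) - sign (t (α n))`
if `‖α n - t (α n)‖_p < 1`; and `α (n + 1) = (α n - b n)⁻¹`. -/
def Alg2 (p : ℕ) [Fact p.Prime] (α : ℕ → ℚ_[p]) (b : ℕ → ℚ) : Prop :=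
  (∀ n, Even n → IsIntFloor p (α n) (b n)) ∧
  (∀ n, Odd n → ∃ c : ℚ, IsFracFloor p (α n) c ∧
    ((‖α n - (c : ℚ_[p])‖ = 1 ∧ b n = c) ∨
     (‖α n - (c : ℚ_[p])‖ < 1 ∧
       b n = c - (if 0 < c then 1 else if c < 0 then -1 else 0)))) ∧
  ∀ n, α (n + 1) = (α n - (b n : ℚ_[p]))⁻¹

open Function

namespace IsUltrametricDist

variable {S : Type*} [SeminormedAddCommGroup S] [IsUltrametricDist S] {x y : S}

theorem norm_sub_le_max (x y : S) : ‖x - y‖ ≤ max ‖x‖ ‖y‖ := by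
  simpa only [sub_eq_add_neg, norm_neg] using norm_add_le_max x (-y)

theorem norm_sub_eq_max_of_norm_ne_norm (h : ‖x‖ ≠ ‖y‖) : ‖x - y‖ = max ‖x‖ ‖y‖ := by
  simpa only [sub_eq_add_neg, norm_neg] using
    norm_add_eq_max_of_norm_ne_norm (y := -y) (by rwa [norm_neg])

theorem norm_sub_eq_right_of_lt (h : ‖x‖ < ‖y‖) : ‖x - y‖ = ‖y‖ := by
  rw [norm_sub_eq_max_of_norm_ne_norm h.ne, max_eq_right h.le]

theorem norm_eq_of_norm_sub_lt (h : ‖x - y‖ < ‖x‖) : ‖y‖ = ‖x‖ := by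
  have := norm_sub_eq_right_of_lt (x := x - y) (y := x) h
  rwa [sub_sub_cancel_left, norm_neg] at this

end IsUltrametricDist

open IsUltrametricDist

theorem Padic.prime_le_norm_of_one_lt_norm {p : ℕ} [Fact p.Prime] {x : ℚ_[p]} (h : 1 < ‖x‖) :
    (p : ℝ) ≤ ‖x‖ := by
  have := (Padic.norm_le_pow_iff_norm_lt_pow_add_one x 0).not
  simp only [zpow_zero, zero_add, zpow_one, not_le, not_lt] at this
  exact this.mp h

theorem norm_inv_sub_inv {K : Type*} [NormedField K] {x y : K} (hx : x ≠ 0) (hy : y ≠ 0) :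
    ‖x⁻¹ - y⁻¹‖ = ‖x - y‖ / (‖x‖ * ‖y‖) := by
  rw [inv_sub_inv' hx hy, norm_mul, norm_mul, norm_inv, norm_inv, norm_sub_rev]
  ring

theorem nonpos_of_bounded_of_mul_le_succ {c B : ℝ} (hc : 1 < c) {f : ℕ → ℝ}
    (hf : ∀ m, c * f m ≤ f (m + 1)) (hB : ∀ m, f m ≤ B) : f 0 ≤ 0 := by
  by_contra! h0
  have hgrow : ∀ m, c ^ m * f 0 ≤ f m := by
    intro m
    induction m with
    | zero => simp
    | succ m ih =>
      calc c ^ (m + 1) * f 0 = c * (c ^ m * f 0) := by ring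
        _ ≤ c * f m := by gcongr
        _ ≤ f (m + 1) := hf m
  obtain ⟨m, hm⟩ := pow_unbounded_of_one_lt (B / f 0) hc
  have := (div_lt_iff₀ h0).mp hm
  linarith [hgrow m, hB m]

def HasPartialQuotients {F : Type*} [DivisionRing F] (b : ℕ → ℚ) (y : ℕ → F) : Prop :=
  ∀ n, y (n + 1) = (y n - b n)⁻¹

def completeQuotients {F : Type*} [DivisionRing F] (b : ℕ → ℚ) (y₀ : F) : ℕ → F
  | 0 => y₀
  | n + 1 => (completeQuotients b y₀ n - b n)⁻¹

theorem hasPartialQuotients_completeQuotients {F : Type*} [DivisionRing F] (b : ℕ → ℚ) (y₀ : F) :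
    HasPartialQuotients b (completeQuotients b y₀) :=
  fun _ => rfl

namespace HasPartialQuotients

section DivisionRing

variable {F : Type*} [DivisionRing F] {b : ℕ → ℚ} {x y : ℕ → F}

theorem eq_of_succ_eq (hx : HasPartialQuotients b x) (hy : HasPartialQuotients b y) {n : ℕ}
    (h : x (n + 1) = y (n + 1)) : x n = y n := by
  rw [hx, hy] at h
  exact sub_left_inj.mp (inv_injective h)

theorem ext (hx : HasPartialQuotients b x) (hy : HasPartialQuotients b y) (h0 : x 0 = y 0) :
    x = y := by
  funext n
  induction n with
  | zero => exact h0
  | succ n ih => rw [hx, hy, ih]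

theorem comp_add (hy : HasPartialQuotients b y) {K : ℕ} (hb : Periodic b K) :
    HasPartialQuotients b (fun n => y (n + K)) := by
  intro n
  simp only [add_right_comm n 1 K, hy (n + K), hb n]

theorem ne_ratCast [CharZero F] (hy : HasPartialQuotients b y) (h0 : ∀ q : ℚ, y 0 ≠ q) :
    ∀ n (q : ℚ), y n ≠ q := by
  intro n
  induction n with
  | zero => exact h0
  | succ n ih =>
    intro q hq
    apply ih (b n + q⁻¹)
    rw [Rat.cast_add, Rat.cast_inv, ← hq, hy, inv_inv, add_sub_cancel]

end DivisionRing

section NormedField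

variable {F : Type*} [NormedField F] {b : ℕ → ℚ} {x y : ℕ → F}

theorem norm_succ (hy : HasPartialQuotients b y) (n : ℕ) : ‖y (n + 1)‖ = ‖y n - b n‖⁻¹ := by
  rw [hy, norm_inv]

theorem norm_sub_succ (hx : HasPartialQuotients b x) (hy : HasPartialQuotients b y) {n : ℕ}
    (hxn : x n - b n ≠ 0) (hyn : y n - b n ≠ 0) :
    ‖x (n + 1) - y (n + 1)‖ = ‖x n - y n‖ / (‖x n - b n‖ * ‖y n - b n‖) := by
  rw [hx, hy, norm_inv_sub_inv hxn hyn, sub_sub_sub_cancel_right]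

end NormedField

end HasPartialQuotients

namespace Alg2

variable {p : ℕ} [Fact p.Prime] {α y : ℕ → ℚ_[p]} {b : ℕ → ℚ} {n : ℕ}

theorem hasPartialQuotients (h : Alg2 p α b) : HasPartialQuotients b α := h.2.2

variable (h : Alg2 p α b) (hirr : ∀ n (q : ℚ), α n ≠ q)
include h hirr

theorem one_lt_norm_of_odd (hn : Odd n) : 1 < ‖α n‖ := by
  obtain ⟨m, rfl⟩ := hn
  rw [h.hasPartialQuotients.norm_succ,
    one_lt_inv₀ (norm_pos_iff.mpr (sub_ne_zero.mpr (hirr _ _)))]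
  exact (h.1 _ (even_two_mul m)).2.2

theorem norm_sub_eq_one_of_odd (hn : Odd n) : ‖α n - b n‖ = 1 := by
  obtain ⟨c, ⟨-, -, -⟩, ⟨hc1, hbc⟩ | ⟨hc1, hbc⟩⟩ := h.2.1 n hn
  · rw [hbc, hc1]
  have hc0 : c ≠ 0 := by
    rintro rfl
    rw [Rat.cast_zero, sub_zero] at hc1
    linarith [h.one_lt_norm_of_odd hirr hn]
  have hsign : ‖((if 0 < c then 1 else if c < 0 then -1 else 0 : ℚ) : ℚ_[p])‖ = 1 := by
    rcases hc0.lt_or_gt with hneg | hpos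
    · simp [hneg, hneg.not_gt]
    · simp [hpos]
  rw [hbc, Rat.cast_sub, sub_sub_eq_add_sub, add_sub_right_comm,
    norm_add_eq_max_of_norm_ne_norm (by rw [hsign]; exact hc1.ne), hsign, max_eq_right hc1.le]

theorem norm_ratCast_eq_of_odd (hn : Odd n) : ‖(b n : ℚ_[p])‖ = ‖α n‖ :=
  norm_eq_of_norm_sub_lt <| by
    rw [h.norm_sub_eq_one_of_odd hirr hn]
    exact h.one_lt_norm_of_odd hirr hn

theorem one_lt_norm_ratCast_of_odd (hn : Odd n) : 1 < ‖(b n : ℚ_[p])‖ :=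
  h.norm_ratCast_eq_of_odd hirr hn ▸ h.one_lt_norm_of_odd hirr hn

theorem prime_le_norm_ratCast_of_odd (hn : Odd n) : (p : ℝ) ≤ ‖(b n : ℚ_[p])‖ :=
  Padic.prime_le_norm_of_one_lt_norm (h.one_lt_norm_ratCast_of_odd hirr hn)

theorem norm_eq_one_of_even (hn : Even n) (hn0 : n ≠ 0) : ‖α n‖ = 1 := by
  obtain ⟨m, rfl⟩ : ∃ m, n = m + 1 := ⟨n - 1, by omega⟩
  rw [h.hasPartialQuotients.norm_succ,
    h.norm_sub_eq_one_of_odd hirr (Nat.not_even_iff_odd.mp (Nat.even_add_one.mp hn)), inv_one]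

theorem norm_ratCast_eq_one_of_even (hn : Even n) (hn0 : n ≠ 0) : ‖(b n : ℚ_[p])‖ = 1 := by
  rw [← h.norm_eq_one_of_even hirr hn hn0]
  exact norm_eq_of_norm_sub_lt (by rw [h.norm_eq_one_of_even hirr hn hn0]; exact (h.1 n hn).2.2)

variable {x : ℕ → ℚ_[p]}

theorem norm_sub_of_norm_add_two_eq_one (hy : HasPartialQuotients b y) (hn : Odd (n + 1))
    (hy2 : ‖y (n + 2)‖ = 1) :
    ‖y n - b n‖ = ‖(b (n + 1) : ℚ_[p])‖⁻¹ ∧ ‖y (n + 1) - b (n + 1)‖ = 1 := by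
  have hodd : ‖y (n + 1) - b (n + 1)‖ = 1 := by
    rwa [hy.norm_succ, inv_eq_one] at hy2
  have hb := h.one_lt_norm_ratCast_of_odd hirr hn
  have hy1 : ‖y (n + 1)‖ = ‖(b (n + 1) : ℚ_[p])‖ :=
    norm_eq_of_norm_sub_lt (by rwa [norm_sub_rev, hodd])
  refine ⟨?_, hodd⟩
  rw [← hy1, hy.norm_succ, inv_inv]

theorem norm_sub_add_two (hx : HasPartialQuotients b x) (hy : HasPartialQuotients b y)
    (hn : Odd (n + 1)) (hx2 : ‖x (n + 2)‖ = 1) (hy2 : ‖y (n + 2)‖ = 1) :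
    ‖x (n + 2) - y (n + 2)‖ = ‖(b (n + 1) : ℚ_[p])‖ ^ 2 * ‖x n - y n‖ := by
  obtain ⟨hx0, hx1⟩ := h.norm_sub_of_norm_add_two_eq_one hirr hx hn hx2
  obtain ⟨hy0, hy1⟩ := h.norm_sub_of_norm_add_two_eq_one hirr hy hn hy2
  have hb : ‖(b (n + 1) : ℚ_[p])‖ ≠ 0 := by linarith [h.one_lt_norm_ratCast_of_odd hirr hn]
  have hne {z : ℚ_[p]} (hz : ‖z‖ = ‖(b (n + 1) : ℚ_[p])‖⁻¹ ∨ ‖z‖ = 1) : z ≠ 0 := by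
    rw [← norm_ne_zero_iff]
    rcases hz with hz | hz <;> rw [hz]
    exacts [inv_ne_zero hb, one_ne_zero]
  rw [show n + 2 = n + 1 + 1 from rfl, hx.norm_sub_succ hy (hne (.inr hx1)) (hne (.inr hy1)),
    hx1, hy1, hx.norm_sub_succ hy (hne (.inl hx0)) (hne (.inl hy0)), hx0, hy0]
  field_simp

theorem eq_of_forall_norm_eq_one (hx : HasPartialQuotients b x) (hy : HasPartialQuotients b y)
    (hx1 : ∀ n, Even n → n ≠ 0 → ‖x n‖ = 1) (hy1 : ∀ n, Even n → n ≠ 0 → ‖y n‖ = 1) :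
    x 2 = y 2 := by
  have hgrow (m : ℕ) : (p : ℝ) ^ 2 * ‖x (2 * m + 2) - y (2 * m + 2)‖ ≤
      ‖x (2 * (m + 1) + 2) - y (2 * (m + 1) + 2)‖ := by
    have hm : Even (2 * (m + 1) + 2) := ⟨m + 2, by ring⟩
    rw [show 2 * (m + 1) + 2 = 2 * m + 2 + 2 by ring,
      h.norm_sub_add_two hirr hx hy (n := 2 * m + 2) ⟨m + 1, by ring⟩ (hx1 _ hm (by omega))
        (hy1 _ hm (by omega))]
    gcongr
    exact h.prime_le_norm_ratCast_of_odd hirr ⟨m + 1, by ring⟩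
  have hbdd (m : ℕ) : ‖x (2 * m + 2) - y (2 * m + 2)‖ ≤ 1 := by
    have hm : Even (2 * m + 2) := ⟨m + 1, by ring⟩
    simpa [hx1 _ hm (by omega), hy1 _ hm (by omega)] using
      norm_sub_le_max (x (2 * m + 2)) (y (2 * m + 2))
  have hp : (1 : ℝ) < (p : ℝ) ^ 2 :=
    one_lt_pow₀ (by exact_mod_cast (Fact.out : p.Prime).one_lt) two_ne_zero
  have := nonpos_of_bounded_of_mul_le_succ hp hgrow hbdd
  exact sub_eq_zero.mp (norm_le_zero_iff.mp this)

theorem periodic {K : ℕ} (hb : Periodic b K) (hK : Even K) : Periodic α K := by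
  have hα := h.hasPartialQuotients
  have hαK := hα.comp_add hb
  have h2 : α 2 = α (2 + K) := h.eq_of_forall_norm_eq_one hirr hα hαK
    (fun n hn hn0 => h.norm_eq_one_of_even hirr hn hn0)
    (fun n hn hn0 => h.norm_eq_one_of_even hirr (hn.add hK) (by omega))
  have h0 : α 0 = α (0 + K) := hα.eq_of_succ_eq hαK (hα.eq_of_succ_eq hαK h2)
  intro n
  exact (congrFun (hα.ext hαK h0) n).symm

theorem norm_add_two_lt_one (hy : HasPartialQuotients b y) (hn : Even n) (hn0 : n ≠ 0)
    (hyn : ‖y n‖ ≠ 1) : ‖y (n + 2)‖ < 1 := by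
  have hbn := h.norm_ratCast_eq_one_of_even hirr hn hn0
  have hb := h.one_lt_norm_ratCast_of_odd hirr hn.add_one
  have h1 : ‖y (n + 1)‖ ≤ 1 := by
    rw [hy.norm_succ, norm_sub_eq_max_of_norm_ne_norm (hbn ▸ hyn), hbn]
    exact inv_le_one_of_one_le₀ (le_max_right _ _)
  rw [show n + 2 = n + 1 + 1 from rfl, hy.norm_succ, norm_sub_eq_right_of_lt (h1.trans_lt hb)]
  exact inv_lt_one_of_one_lt₀ hb

theorem norm_lt_one_of_periodic (hy : HasPartialQuotients b y) {K : ℕ} (hyK : Periodic y K)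
    (hK : Even K) (hK0 : K ≠ 0) (hne : y 2 ≠ α 2) : ‖y 0‖ < 1 := by
  by_cases hall : ∀ n, Even n → n ≠ 0 → ‖y n‖ = 1
  · exact absurd (h.eq_of_forall_norm_eq_one hirr hy h.hasPartialQuotients hall
      (fun n hn hn0 => h.norm_eq_one_of_even hirr hn hn0)) hne
  push Not at hall
  obtain ⟨n, hn, hn0, hyn⟩ := hall
  have hsmall (j : ℕ) : ‖y (n + 2 * (j + 1))‖ < 1 := by
    induction j with
    | zero => exact h.norm_add_two_lt_one hirr hy hn hn0 hyn
    | succ j ih =>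
      exact h.norm_add_two_lt_one hirr hy (n := n + 2 * (j + 1)) (hn.add (even_two_mul _))
        (by omega) ih.ne
  have hlater (m : ℕ) (hm : Even m) (hnm : n < m) : ‖y m‖ < 1 := by
    obtain ⟨a, rfl⟩ := hn
    obtain ⟨c, rfl⟩ := hm
    simpa [show a + a + 2 * (c - a - 1 + 1) = c + c by omega] using hsmall (c - a - 1)
  rw [← hyK.nat_mul_eq (n + 1), Nat.cast_id]
  exact hlater _ (hK.mul_left _) (by nlinarith [Nat.one_le_iff_ne_zero.mpr hK0])

end Alg2

def IsConjPair {F : Type*} [Field F] (r : ℚ) (a u v : F) : Prop :=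
  ∃ x y : ℚ, u = x + y * a ∧ v = x + y * (r - a)

namespace IsConjPair

variable {F : Type*} [Field F] {r s : ℚ} {a u v v' : F}

theorem self (r : ℚ) (a : F) : IsConjPair r a a (r - a) := ⟨0, 1, by simp, by simp⟩

variable [CharZero F]

theorem sub_ratCast (h : IsConjPair r a u v) (q : ℚ) : IsConjPair r a (u - q) (v - q) := by
  obtain ⟨x, y, rfl, rfl⟩ := h
  exact ⟨x - q, y, by push_cast; ring, by push_cast; ring⟩

variable (ha : ∀ q : ℚ, a ≠ q)
include ha

theorem right_unique (h : IsConjPair r a u v) (h' : IsConjPair r a u v') : v = v' := by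
  obtain ⟨x, y, rfl, rfl⟩ := h
  obtain ⟨x', y', hu, rfl⟩ := h'
  obtain rfl : y = y' := by
    by_contra hy
    apply ha ((x' - x) / (y - y'))
    rw [Rat.cast_div, eq_div_iff (by exact_mod_cast sub_ne_zero.mpr hy)]
    push_cast
    linear_combination hu
  obtain rfl : x = x' := by exact_mod_cast (by linear_combination hu : (x : F) = x')
  rfl

theorem ne (h : IsConjPair r a u v) (hu : ∀ q : ℚ, u ≠ q) : u ≠ v := by
  obtain ⟨x, y, rfl, rfl⟩ := h
  intro huv
  rcases eq_or_ne y 0 with rfl | hy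
  · exact hu x (by simp)
  · have h2a : (y : F) * (2 * a - r) = 0 := by linear_combination huv
    rw [mul_eq_zero, Rat.cast_eq_zero] at h2a
    apply ha (r / 2)
    push_cast
    linear_combination h2a.resolve_left hy / 2

theorem inv (hquad : a ^ 2 = r * a + s) (h : IsConjPair r a u v) (hu : u ≠ 0) :
    IsConjPair r a u⁻¹ v⁻¹ := by
  obtain ⟨x, y, rfl, rfl⟩ := h
  have hv : (x : F) + y * (r - a) ≠ 0 := by
    intro hv
    rcases eq_or_ne y 0 with rfl | hy
    · simp_all
    · have hy' : (y : F) ≠ 0 := by exact_mod_cast hy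
      apply ha (r + x / y)
      push_cast
      field_simp
      linear_combination -hv
  set N : ℚ := x ^ 2 + x * y * r - y ^ 2 * s
  have hnorm : ((x : F) + y * a) * (x + y * (r - a)) = N := by
    push_cast [N]
    linear_combination (-(y : F) ^ 2) * hquad
  refine ⟨(x + y * r) / N, -y / N, ?_, ?_⟩
  · calc ((x : F) + y * a)⁻¹ = (x + y * (r - a)) / ((x + y * a) * (x + y * (r - a))) := by
          field_simp
      _ = _ := by rw [hnorm]; push_cast; ring
  · calc ((x : F) + y * (r - a))⁻¹ = (x + y * a) / ((x + y * a) * (x + y * (r - a))) := by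
          field_simp
      _ = _ := by rw [hnorm]; push_cast; ring

end IsConjPair

theorem HasPartialQuotients.isConjPair {F : Type*} [Field F] [CharZero F] {r s : ℚ} {a : F}
    (ha : ∀ q : ℚ, a ≠ q) (hquad : a ^ 2 = r * a + s) {b : ℕ → ℚ} {x y : ℕ → F}
    (hx : HasPartialQuotients b x) (hy : HasPartialQuotients b y) (hirr : ∀ n (q : ℚ), x n ≠ q)
    (h0 : IsConjPair r a (x 0) (y 0)) (n : ℕ) : IsConjPair r a (x n) (y n) := by
  induction n with
  | zero => exact h0
  | succ n ih =>
    rw [hx, hy]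
    exact (ih.sub_ratCast (b n)).inv ha hquad (sub_ne_zero.mpr (hirr n (b n)))

theorem stmt_14_general (p : ℕ) [Fact p.Prime]
    (α₀ : ℚ_[p]) (hirr : ∀ q : ℚ, α₀ ≠ (q : ℚ_[p]))
    (r s : ℚ) (hquad : α₀ ^ 2 = (r : ℚ_[p]) * α₀ + (s : ℚ_[p]))
    (α : ℕ → ℚ_[p]) (b : ℕ → ℚ) (h0 : α 0 = α₀) (halg : Alg2 p α b)
    (hpure : ∃ k : ℕ, 1 ≤ k ∧ ∀ n, b (n + k) = b n) :
    ‖α₀‖ = 1 ∧ ‖(r : ℚ_[p]) - α₀‖ < 1 := by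
  obtain ⟨k, hk, hbk⟩ := hpure
  have hb : Periodic b (2 * k) := Periodic.nat_mul hbk 2
  have hK : Even (2 * k) := even_two_mul k
  have hα := halg.hasPartialQuotients
  have hirrα : ∀ n (q : ℚ), α n ≠ q := hα.ne_ratCast (h0 ▸ hirr)
  have hαper : Periodic α (2 * k) := halg.periodic hirrα hb hK
  set β := completeQuotients b ((r : ℚ_[p]) - α₀)
  have hβ : HasPartialQuotients b β := hasPartialQuotients_completeQuotients _ _
  have hpair : ∀ n, IsConjPair r α₀ (α n) (β n) :=
    hα.isConjPair hirr hquad hβ hirrα (by rw [h0]; exact IsConjPair.self r α₀)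
  have hβper : Periodic β (2 * k) := fun n =>
    (hpair (n + 2 * k)).right_unique hirr (hαper n ▸ hpair n)
  constructor
  · rw [← h0, ← hαper.nat_mul_eq 1, Nat.cast_one, one_mul]
    exact halg.norm_eq_one_of_even hirrα hK (by omega)
  · exact halg.norm_lt_one_of_periodic hirrα hβ hβper hK (by omega)
      ((hpair 2).ne hirr (hirrα 2)).symm

/-- For `α₀` a quadratic irrational (with `α₀² = r·α₀ + s`, conjugate `r - α₀`)
whose Browkin II expansion is periodic: if the expansion is purely periodic,
then `‖α₀‖_p = 1` and `‖ᾱ₀‖_p < 1`. -/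
theorem stmt_14 (p : ℕ) [Fact p.Prime] (hp : p ≠ 2)
    (α₀ : ℚ_[p]) (hirr : ∀ q : ℚ, α₀ ≠ (q : ℚ_[p]))
    (r s : ℚ) (hquad : α₀ ^ 2 = (r : ℚ_[p]) * α₀ + (s : ℚ_[p]))
    (α : ℕ → ℚ_[p]) (b : ℕ → ℚ) (h0 : α 0 = α₀) (halg : Alg2 p α b)
    (hper : ∃ h k : ℕ, 1 ≤ k ∧ ∀ n, h ≤ n → b (n + k) = b n)
    (hpure : ∃ k : ℕ, 1 ≤ k ∧ ∀ n, b (n + k) = b n) :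
    ‖α₀‖ = 1 ∧ ‖(r : ℚ_[p]) - α₀‖ < 1 :=
  stmt_14_general p α₀ hirr r s hquad α b h0 halg hpure
end
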